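/- If W satisfies the minimal constraints, W·ln W, W², and W³ are integrable, and the purity of W satisfies μ ≤ 1/2, then S[W] ≥ 1 + ln π. -/

import Mathlib

open Real MeasureTheory

/-! The tangent-line bound `log (t w) ≤ t w - 1` gives `-w log w ≥ (1 + log t) w - t w²`
pointwise, so integrating against a probability density, `S[W] ≥ 1 + log t - t ∫ W²` for every
`t > 0`. Since `∫ W² ≤ 1 / (4π)`, the choice `t = 4π` yields `S[W] ≥ log 4 + log π`, and
`log 4 > 1` because `e < 4`. -/

theorem Real.mul_log_le_mul_sq_sub {w t : ℝ} (hw : 0 ≤ w) (ht : 0 < t) :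
    w * log w ≤ t * w ^ 2 - (1 + log t) * w := by
  rcases hw.eq_or_lt with rfl | hw
  · simp
  have h := log_le_sub_one_of_pos (mul_pos ht hw)
  rw [log_mul ht.ne' hw.ne'] at h
  nlinarith [mul_le_mul_of_nonneg_left h hw.le]

theorem MeasureTheory.integral_mul_log_le {α : Type*} [MeasurableSpace α] {μ : Measure α}
    {f : α → ℝ} (hf : 0 ≤ᵐ[μ] f) (hf_int : Integrable f μ) (hf_sq : Integrable (fun x ↦ f x ^ 2) μ)
    (hf_log : Integrable (fun x ↦ f x * log (f x)) μ) {t : ℝ} (ht : 0 < t) :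
    ∫ x, f x * log (f x) ∂μ ≤ t * ∫ x, f x ^ 2 ∂μ - (1 + log t) * ∫ x, f x ∂μ := by
  calc ∫ x, f x * log (f x) ∂μ ≤ ∫ x, t * f x ^ 2 - (1 + log t) * f x ∂μ :=
        integral_mono_ae hf_log ((hf_sq.const_mul t).sub (hf_int.const_mul _))
          (hf.mono fun x hx ↦ Real.mul_log_le_mul_sq_sub hx ht)
    _ = t * ∫ x, f x ^ 2 ∂μ - (1 + log t) * ∫ x, f x ∂μ := by
        rw [integral_sub (hf_sq.const_mul t) (hf_int.const_mul _), integral_const_mul,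
          integral_const_mul]

theorem Real.one_lt_log_four : 1 < log 4 := by
  rw [lt_log_iff_exp_lt (by norm_num)]
  linarith [exp_one_lt_d9]

theorem wigner_conjecture_of_purity_le_half (W : ℝ × ℝ → ℝ)
    (hpos : ∀ z, 0 ≤ W z)
    (hnorm : ∫ z, W z = 1)
    (hlog : Integrable (fun z => W z * Real.log (W z)))
    (hsq : Integrable (fun z => (W z) ^ 2))
    (hmu : 2 * Real.pi * (∫ z, (W z) ^ 2) ≤ 1 / 2) :
    (-∫ z, W z * Real.log (W z)) ≥ 1 + Real.log Real.pi := by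
  have hW : Integrable W := .of_integral_ne_zero (by simp [hnorm])
  have h := integral_mul_log_le (ae_of_all _ hpos) hW hsq hlog (t := 4 * π) (by positivity)
  rw [hnorm, log_mul (by norm_num) pi_ne_zero] at h
  linarith [one_lt_log_four]
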